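/- Let n ≥ 3 be an odd natural number, k ∈ ℕ with 1 ≤ k ≤ (n−1)/2, l ∈ ℕ with 2l < n + 2, ε ∈ {1, −1}, and j ∈ ℕ. Set L = n/2 + 1 + j. Then Z_ε((2l+1)/2, j, 1) = ε · ( L · ∏_{a=1}^{l} (L² − a²) ) / ( (n/2 + 1) · ∏_{a=1}^{l} ((n/2 + 1)² − a²) ) and Z_ε((2l+1)/2, j, 0) = ((n − 2k − 2l)/(n − 2k + 2 + 2l)) · Z_ε((2l+1)/2, j, 1). In particular, Z_ε((2l+1)/2, j, 1) is a nonzero constant multiple, independent of j and ε, of ε·L(L² − 1²)···(L² − l²), and Z_ε((2l+1)/2, j, 0) is the same constant multiple of ε·((n − 2k − 2l)/(n − 2k + 2 + 2l))·L(L² − 1²)···(L² − l²). -/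

import Mathlib

/-- Case II spectral function on the summands `𝒱_ε(j, 1)` of the bundle `𝕋ᵏ` over the
odd sphere `Sⁿ`, with `L = n/2 + 1 + j`. -/
noncomputable def Zspec1 (n : ℕ) (ε r : ℝ) (j : ℕ) : ℝ :=
  ε * (Real.Gamma ((n : ℝ) / 2 + 1 + j + 1 / 2 + r) * Real.Gamma ((n : ℝ) / 2 + 3 / 2 - r)) /
    (Real.Gamma ((n : ℝ) / 2 + 1 + j + 1 / 2 - r) * Real.Gamma ((n : ℝ) / 2 + 3 / 2 + r))

/-- Case II spectral function on the summands `𝒱_ε(j, 0)`. -/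
noncomputable def Zspec0 (n k : ℕ) (ε r : ℝ) (j : ℕ) : ℝ :=
  (((n : ℝ) - 2 * k + 1 - 2 * r) / ((n : ℝ) - 2 * k + 1 + 2 * r)) * Zspec1 n ε r j

/-!
At `r = l + 1/2` both Gamma quotients in `Zspec1` telescope:
`Γ(x + l + 1) / Γ(x - l) = (x + l)(x + l - 1)⋯(x - l) = x ∏_{a=1}^{l} (x² - a²)`,
applied at `x = L` and at `x = n/2 + 1`, both larger than `l` since `2l < n + 2`.
-/

open Finset

theorem Real.Gamma_add_nat_add_one_eq_mul_Gamma_sub_nat (l : ℕ) {x : ℝ} (hx : (l : ℝ) < x) :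
    Real.Gamma (x + l + 1) =
      (x * ∏ a ∈ Icc 1 l, (x ^ 2 - (a : ℝ) ^ 2)) * Real.Gamma (x - l) := by
  induction l with
  | zero => simp [Real.Gamma_add_one (by positivity : x ≠ 0)]
  | succ m ih =>
    push_cast at hx ⊢
    have hm : (m : ℝ) < x := by linarith
    have h_top : x + (m + 1) + 1 = (x + m + 1) + 1 := by ring
    have h_bot : x - m = (x - (m + 1)) + 1 := by ring
    rw [h_top, Real.Gamma_add_one (by linarith), ih hm, prod_Icc_succ_top (by omega), h_bot,
      Real.Gamma_add_one (by linarith)]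
    push_cast
    ring

theorem mul_prod_sq_sub_sq_pos (l : ℕ) {x : ℝ} (hx : (l : ℝ) < x) :
    0 < x * ∏ a ∈ Icc 1 l, (x ^ 2 - (a : ℝ) ^ 2) := by
  have hx0 : 0 < x := lt_of_le_of_lt l.cast_nonneg hx
  refine mul_pos hx0 (prod_pos fun a ha => ?_)
  have ha : (a : ℝ) ≤ l := by exact_mod_cast (mem_Icc.mp ha).2
  nlinarith [Nat.cast_nonneg (α := ℝ) a]

theorem Zspec1_half_odd (n l : ℕ) (hl : (l : ℝ) < (n : ℝ) / 2 + 1) (ε : ℝ) (j : ℕ) :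
    Zspec1 n ε ((2 * (l : ℝ) + 1) / 2) j =
      ε * (((n : ℝ) / 2 + 1 + j) *
          ∏ a ∈ Icc 1 l, (((n : ℝ) / 2 + 1 + j) ^ 2 - (a : ℝ) ^ 2)) /
        (((n : ℝ) / 2 + 1) * ∏ a ∈ Icc 1 l, (((n : ℝ) / 2 + 1) ^ 2 - (a : ℝ) ^ 2)) := by
  set M : ℝ := (n : ℝ) / 2 + 1
  set L : ℝ := M + j
  have hlL : (l : ℝ) < L := by linarith [Nat.cast_nonneg (α := ℝ) j]
  have hGM : Real.Gamma (M - l) ≠ 0 := (Real.Gamma_pos_of_pos (by linarith)).ne'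
  have hGL : Real.Gamma (L - l) ≠ 0 := (Real.Gamma_pos_of_pos (by linarith)).ne'
  have hPM := (mul_prod_sq_sub_sq_pos l hl).ne'
  have e1 : (n : ℝ) / 2 + 1 + j + 1 / 2 + (2 * (l : ℝ) + 1) / 2 = L + l + 1 := by ring
  have e2 : (n : ℝ) / 2 + 3 / 2 - (2 * (l : ℝ) + 1) / 2 = M - l := by ring
  have e3 : (n : ℝ) / 2 + 1 + j + 1 / 2 - (2 * (l : ℝ) + 1) / 2 = L - l := by ring
  have e4 : (n : ℝ) / 2 + 3 / 2 + (2 * (l : ℝ) + 1) / 2 = M + l + 1 := by ring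
  rw [Zspec1, e1, e2, e3, e4, Real.Gamma_add_nat_add_one_eq_mul_Gamma_sub_nat l hlL,
    Real.Gamma_add_nat_add_one_eq_mul_Gamma_sub_nat l hl]
  field_simp

theorem Zspec0_half_odd (n k l : ℕ) (ε : ℝ) (j : ℕ) :
    Zspec0 n k ε ((2 * (l : ℝ) + 1) / 2) j =
      (((n : ℝ) - 2 * k - 2 * l) / ((n : ℝ) - 2 * k + 2 + 2 * l)) *
        Zspec1 n ε ((2 * (l : ℝ) + 1) / 2) j := by
  rw [Zspec0]
  ring_nf

theorem Zspec_case2_odd_order_general (n k l : ℕ) (hl : 2 * l < n + 2)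
    (ε : ℝ) (j : ℕ) :
    Zspec1 n ε ((2 * (l : ℝ) + 1) / 2) j =
      ε * (((n : ℝ) / 2 + 1 + j) *
          ∏ a ∈ Finset.Icc 1 l, (((n : ℝ) / 2 + 1 + j) ^ 2 - (a : ℝ) ^ 2)) /
        (((n : ℝ) / 2 + 1) *
          ∏ a ∈ Finset.Icc 1 l, (((n : ℝ) / 2 + 1) ^ 2 - (a : ℝ) ^ 2)) ∧
    Zspec0 n k ε ((2 * (l : ℝ) + 1) / 2) j =
      (((n : ℝ) - 2 * k - 2 * l) / ((n : ℝ) - 2 * k + 2 + 2 * l)) *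
        Zspec1 n ε ((2 * (l : ℝ) + 1) / 2) j ∧
    ((n : ℝ) / 2 + 1) * ∏ a ∈ Finset.Icc 1 l, (((n : ℝ) / 2 + 1) ^ 2 - (a : ℝ) ^ 2) ≠ 0 := by
  have hlM : (l : ℝ) < (n : ℝ) / 2 + 1 := by
    have : (2 * l : ℝ) < n + 2 := by exact_mod_cast hl
    linarith
  exact ⟨Zspec1_half_odd n l hlM ε j, Zspec0_half_odd n k l ε j,
    (mul_prod_sq_sub_sq_pos l hlM).ne'⟩

/-- At half-odd-integer order `2r = 2l + 1` with `2l < n + 2`, with `L = n/2 + 1 + j`: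
`Z_ε((2l+1)/2, j, 1) = ε (L ∏_{a=1}^{l}(L² − a²)) / ((n/2+1) ∏_{a=1}^{l}((n/2+1)² − a²))`
and `Z_ε((2l+1)/2, j, 0) = ((n−2k−2l)/(n−2k+2+2l)) · Z_ε((2l+1)/2, j, 1)`; the
normalizing constant (the denominator) is nonzero and independent of `j` and `ε`. -/
theorem Zspec_case2_odd_order (n k l : ℕ) (hn : Odd n) (hn3 : 3 ≤ n)
    (hk1 : 1 ≤ k) (hk2 : k ≤ (n - 1) / 2) (hl : 2 * l < n + 2)
    (ε : ℝ) (hε : ε = 1 ∨ ε = -1) (j : ℕ) :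
    Zspec1 n ε ((2 * (l : ℝ) + 1) / 2) j =
      ε * (((n : ℝ) / 2 + 1 + j) *
          ∏ a ∈ Finset.Icc 1 l, (((n : ℝ) / 2 + 1 + j) ^ 2 - (a : ℝ) ^ 2)) /
        (((n : ℝ) / 2 + 1) *
          ∏ a ∈ Finset.Icc 1 l, (((n : ℝ) / 2 + 1) ^ 2 - (a : ℝ) ^ 2)) ∧
    Zspec0 n k ε ((2 * (l : ℝ) + 1) / 2) j =
      (((n : ℝ) - 2 * k - 2 * l) / ((n : ℝ) - 2 * k + 2 + 2 * l)) *
        Zspec1 n ε ((2 * (l : ℝ) + 1) / 2) j ∧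
    ((n : ℝ) / 2 + 1) * ∏ a ∈ Finset.Icc 1 l, (((n : ℝ) / 2 + 1) ^ 2 - (a : ℝ) ^ 2) ≠ 0 :=
  Zspec_case2_odd_order_general n k l hl ε j
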